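/- arXiv:1908.04435 — 2 statements merged into one kernel-verified Lean document; each statement's English description precedes it below -/
import Mathlib

section
/- Let M and M̂ be as in the single-component specialization construction. Then the characteristic polynomials satisfy charpoly(M̂) = charpoly(Z)^{y·w − 1} · charpoly(M) as polynomials with real coefficients. Equivalently, det(λI − M̂) = det(λI − Z)^{y·w − 1} · det(λI − M) for all λ. -/
/-!
The lower right block of `λ - M̂` is block diagonal with `y·w` copies of `λ - Z`. Where
`λ - Z` is invertible, taking the Schur complement of that block gives
`det(λ - M̂) = det(λ - Z)^{yw} · det(λ - U - Σ_{i,j} Y_i (λ - Z)⁻¹ W_j)`, and the sum factors as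
`Y (λ - Z)⁻¹ W`, so the second factor is the Schur complement of `Z` in `M`, which equals
`det(λ - M) / det(λ - Z)`. The identity of characteristic polynomials then holds at all but the
finitely many eigenvalues of `Z`, hence identically.
-/

open Matrix

/-- The single-component specialization `M̂` of the block matrix `M = [[U, ΣY_i],[ΣW_j, Z]]`:
indices `B ⊕ (P × C)` with `P = Fin y × Fin w`; its `(B,B)` block is `U`, its
`(B, {(i,j)}×C)` block is `Y i`, its `({(i,j)}×C, B)` block is `W j`, its diagonal
`({(i,j)}×C, {(i,j)}×C)` blocks are `Z`, and all blocks between distinct copies are zero. -/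
def specialization {l m y w : ℕ}
    (U : Matrix (Fin l) (Fin l) ℝ) (Z : Matrix (Fin m) (Fin m) ℝ)
    (Y : Fin y → Matrix (Fin l) (Fin m) ℝ) (W : Fin w → Matrix (Fin m) (Fin l) ℝ) :
    Matrix (Fin l ⊕ ((Fin y × Fin w) × Fin m)) (Fin l ⊕ ((Fin y × Fin w) × Fin m)) ℝ :=
  fun r c =>
    match r, c with
    | Sum.inl a, Sum.inl b => U a b
    | Sum.inl a, Sum.inr ((i, _), c') => Y i a c'
    | Sum.inr ((_, j), r'), Sum.inl b => W j r' b
    | Sum.inr (p, r'), Sum.inr (q, c') => if p = q then Z r' c' else 0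

/-- The original block matrix `M = [[U, Y],[W, Z]]` with `Y = ΣY_i`, `W = ΣW_j`. -/
def origMatrix {l m y w : ℕ}
    (U : Matrix (Fin l) (Fin l) ℝ) (Z : Matrix (Fin m) (Fin m) ℝ)
    (Y : Fin y → Matrix (Fin l) (Fin m) ℝ) (W : Fin w → Matrix (Fin m) (Fin l) ℝ) :
    Matrix (Fin l ⊕ Fin m) (Fin l ⊕ Fin m) ℝ :=
  Matrix.fromBlocks U (∑ i, Y i) (∑ j, W j) Z

open Polynomial
open scoped Kronecker

theorem Polynomial.eq_of_eval_eq_of_eval_ne_zero {K : Type*} [Field K] [Infinite K]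
    {p q r : K[X]} (hr : r ≠ 0) (h : ∀ x, r.eval x ≠ 0 → p.eval x = q.eval x) : p = q :=
  eq_of_infinite_eval_eq p q <| (finite_setOfPred_isRoot hr).infinite_compl.mono fun x hx => h x hx

namespace Matrix

variable {R : Type*} {l m n P : Type*}

theorem eval_charpoly_eq_det_smul_one_sub [CommRing R] [Fintype n] [DecidableEq n]
    (M : Matrix n n R) (t : R) : M.charpoly.eval t = (t • 1 - M).det := by
  rw [eval_charpoly, scalar_apply, smul_one_eq_diagonal]

theorem smul_one_sub_fromBlocks [Ring R] [DecidableEq l] [DecidableEq m] (t : R)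
    (A : Matrix l l R) (B : Matrix l m R) (C : Matrix m l R) (D : Matrix m m R) :
    t • 1 - fromBlocks A B C D = fromBlocks (t • 1 - A) (-B) (-C) (t • 1 - D) := by
  ext (i | i) (j | j) <;> simp [one_apply]

theorem det_smul_one_sub_fromBlocks [CommRing R] [Fintype l] [Fintype m] [DecidableEq l]
    [DecidableEq m] (t : R)
    (A : Matrix l l R) (B : Matrix l m R) (C : Matrix m l R) (D : Matrix m m R)
    (hD : IsUnit (t • 1 - D).det) :
    (t • 1 - fromBlocks A B C D).det
      = (t • 1 - D).det * (t • 1 - A - B * (t • 1 - D)⁻¹ * C).det := by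
  have := (t • 1 - D).invertibleOfIsUnitDet hD
  rw [smul_one_sub_fromBlocks, det_fromBlocks₂₂, invOf_eq_nonsing_inv]
  simp only [Matrix.neg_mul, Matrix.mul_neg, neg_neg]

theorem smul_one_sub_one_kronecker [CommRing R] [DecidableEq m] [DecidableEq P] (t : R)
    (Z : Matrix m m R) : t • 1 - (1 : Matrix P P R) ⊗ₖ Z = 1 ⊗ₖ (t • 1 - Z) := by
  ext ⟨p, a⟩ ⟨q, b⟩
  by_cases hpq : p = q <;> by_cases hab : a = b <;> simp [hpq, hab]

def blockRow (F : P → Matrix l m R) : Matrix l (P × m) R := of fun a pc => F pc.1 a pc.2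

def blockCol (G : P → Matrix m n R) : Matrix (P × m) n R := of fun pr b => G pr.1 pr.2 b

theorem blockRow_mul_one_kronecker_mul_blockCol [CommRing R] [Fintype m] [Fintype P]
    [DecidableEq P] (F : P → Matrix l m R) (A : Matrix m m R) (G : P → Matrix m n R) :
    blockRow F * ((1 : Matrix P P R) ⊗ₖ A) * blockCol G = ∑ p, F p * A * G p := by
  ext a b
  simp [blockRow, blockCol, mul_apply, Fintype.sum_prod_type, one_apply, sum_apply]

end Matrix

section Specialization

variable {l m y w : ℕ} (U : Matrix (Fin l) (Fin l) ℝ) (Z : Matrix (Fin m) (Fin m) ℝ)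
    (Y : Fin y → Matrix (Fin l) (Fin m) ℝ) (W : Fin w → Matrix (Fin m) (Fin l) ℝ)

theorem specialization_eq_fromBlocks :
    specialization U Z Y W
      = fromBlocks U (blockRow fun p => Y p.1) (blockCol fun p => W p.2) (1 ⊗ₖ Z) := by
  ext (a | ⟨p, a⟩) (b | ⟨q, b⟩)
  all_goals simp [specialization, blockRow, blockCol, one_apply]

theorem det_smul_one_sub_specialization (hy : 1 ≤ y) (hw : 1 ≤ w) (t : ℝ)
    (hZ : (t • 1 - Z).det ≠ 0) :
    (t • 1 - specialization U Z Y W).det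
      = (t • 1 - Z).det ^ (y * w - 1) * (t • 1 - origMatrix U Z Y W).det := by
  have hZ' : IsUnit (t • 1 - Z).det := hZ.isUnit
  have hZP : IsUnit (t • 1 - (1 : Matrix (Fin y × Fin w) _ ℝ) ⊗ₖ Z).det := by
    rw [smul_one_sub_one_kronecker, det_kronecker, det_one, one_pow, one_mul]
    exact hZ'.pow _
  have hsum : ∑ p : Fin y × Fin w, Y p.1 * (t • 1 - Z)⁻¹ * W p.2
      = (∑ i, Y i) * (t • 1 - Z)⁻¹ * ∑ j, W j := by
    simp only [Fintype.sum_prod_type, Matrix.sum_mul, Matrix.mul_sum]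
    exact Finset.sum_comm
  have hspec : (t • 1 - specialization U Z Y W).det = (t • 1 - Z).det ^ (y * w)
      * (t • 1 - U - (∑ i, Y i) * (t • 1 - Z)⁻¹ * ∑ j, W j).det := by
    rw [specialization_eq_fromBlocks, det_smul_one_sub_fromBlocks _ _ _ _ _ hZP,
      smul_one_sub_one_kronecker, det_kronecker, inv_kronecker, inv_one,
      blockRow_mul_one_kronecker_mul_blockCol, hsum, det_one, one_pow, one_mul,
      Fintype.card_prod, Fintype.card_fin, Fintype.card_fin]
  obtain ⟨k, hk⟩ : ∃ k, y * w = k + 1 := Nat.exists_eq_add_one.mpr (Nat.mul_pos hy hw)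
  rw [hspec, origMatrix, det_smul_one_sub_fromBlocks _ _ _ _ _ hZ', hk, Nat.add_sub_cancel,
    pow_succ, mul_assoc]

end Specialization

theorem charpoly_specialization_general
    {l m y w : ℕ} (hy : 1 ≤ y) (hw : 1 ≤ w)
    (U : Matrix (Fin l) (Fin l) ℝ) (Z : Matrix (Fin m) (Fin m) ℝ)
    (Y : Fin y → Matrix (Fin l) (Fin m) ℝ) (W : Fin w → Matrix (Fin m) (Fin l) ℝ) :
    Matrix.charpoly (specialization U Z Y W)
      = Matrix.charpoly Z ^ (y * w - 1) * Matrix.charpoly (origMatrix U Z Y W)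
    ∧ ∀ lam : ℝ,
      Matrix.det (lam • (1 : Matrix (Fin l ⊕ ((Fin y × Fin w) × Fin m))
            (Fin l ⊕ ((Fin y × Fin w) × Fin m)) ℝ) - specialization U Z Y W)
        = Matrix.det (lam • (1 : Matrix (Fin m) (Fin m) ℝ) - Z) ^ (y * w - 1)
          * Matrix.det (lam • (1 : Matrix (Fin l ⊕ Fin m) (Fin l ⊕ Fin m) ℝ)
              - origMatrix U Z Y W) := by
  have hcharpoly : (specialization U Z Y W).charpoly
      = Z.charpoly ^ (y * w - 1) * (origMatrix U Z Y W).charpoly := by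
    refine eq_of_eval_eq_of_eval_ne_zero Z.charpoly_monic.ne_zero fun t ht => ?_
    simp only [eval_mul, eval_pow, eval_charpoly_eq_det_smul_one_sub] at ht ⊢
    exact det_smul_one_sub_specialization U Z Y W hy hw t ht
  refine ⟨hcharpoly, fun t => ?_⟩
  simpa only [eval_mul, eval_pow, eval_charpoly_eq_det_smul_one_sub]
    using congrArg (eval t) hcharpoly

/-- `charpoly(M̂) = charpoly(Z)^{y·w − 1} · charpoly(M)`; equivalently
`det(λI − M̂) = det(λI − Z)^{y·w − 1} · det(λI − M)` for all `λ`. -/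
theorem charpoly_specialization
    {l m y w : ℕ} (hl : 1 ≤ l) (hm : 1 ≤ m) (hy : 1 ≤ y) (hw : 1 ≤ w)
    (U : Matrix (Fin l) (Fin l) ℝ) (Z : Matrix (Fin m) (Fin m) ℝ)
    (Y : Fin y → Matrix (Fin l) (Fin m) ℝ) (W : Fin w → Matrix (Fin m) (Fin l) ℝ) :
    Matrix.charpoly (specialization U Z Y W)
      = Matrix.charpoly Z ^ (y * w - 1) * Matrix.charpoly (origMatrix U Z Y W)
    ∧ ∀ lam : ℝ,
      Matrix.det (lam • (1 : Matrix (Fin l ⊕ ((Fin y × Fin w) × Fin m))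
            (Fin l ⊕ ((Fin y × Fin w) × Fin m)) ℝ) - specialization U Z Y W)
        = Matrix.det (lam • (1 : Matrix (Fin m) (Fin m) ℝ) - Z) ^ (y * w - 1)
          * Matrix.det (lam • (1 : Matrix (Fin l ⊕ Fin m) (Fin l ⊕ Fin m) ℝ)
              - origMatrix U Z Y W) :=
  charpoly_specialization_general hy hw U Z Y W
end

section
/- Spectral radius of thinned specializations: let M be as in the single-component specialization construction with all blocks U, Z, Y_1,…,Y_y, W_1,…,W_w having nonnegative entries, and let T be any subset of P = {1,…,y}×{1,…,w}. Let M̂_T be the thinned specialization of M over T: the square matrix of size ℓ + |T|·m with index set B ⊕ (T × C), whose (B,B) block is U, whose (B, {(i,j)}×C) block is Y_i and ({(i,j)}×C, B) block is W_j for (i,j) ∈ T, whose ({(i,j)}×C, {(i,j)}×C) block is Z, and whose blocks between distinct elements of T are zero. Then ρ(M̂_T) ≤ ρ(M). -/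
/-!
Write `A` for the thinned specialization and `N` for `M`. Projecting `A` straight onto `N` does not
work: the copies `(i,j)` and `(i,j')` of `Z` would both be entered through `Y_i`. So pass through
the matrix `E` on `B ⊕ ({1,…,w} × C)` with one copy of `Z` per exit branch `j`, entered through the
full `Y` and left through `W_j`. Forgetting the entry branch, `(i,j) ↦ j`, maps `A` to `E` so that
the row sums of `A` over each fibre are at most the entries of `E`; forgetting the exit branch maps
`E` to `N` so that the column sums of `E` over each fibre equal the entries of `N`.

For nonnegative `S`, `Q` and `φ` with such a row-fibre inequality, induction on `k` gives
`(S^k) i j ≤ (Q^k) (φ i) (φ j)`, hence `‖S^k‖ ≤ |dom φ| ‖Q^k‖` in the `ℓ^∞` operator norm, and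
Gelfand's formula gives `ρ(S) ≤ ρ(Q)`. The column version follows by transposing.
-/

open Matrix

/-- The thinned specialization `M̂_T` of `M` over a subset `T` of the branch pairs
`P = {1,…,y} × {1,…,w}`: only the copies of `Z` indexed by `T` are kept. -/
def thinnedSpecialization {l m y w : ℕ}
    (U : Matrix (Fin l) (Fin l) ℝ) (Z : Matrix (Fin m) (Fin m) ℝ)
    (Y : Fin y → Matrix (Fin l) (Fin m) ℝ) (W : Fin w → Matrix (Fin m) (Fin l) ℝ)
    (T : Finset (Fin y × Fin w)) :
    Matrix (Fin l ⊕ (↥T × Fin m)) (Fin l ⊕ (↥T × Fin m)) ℝ :=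
  fun r c =>
    match r, c with
    | Sum.inl a, Sum.inl b => U a b
    | Sum.inl a, Sum.inr (p, c') => Y p.1.1 a c'
    | Sum.inr (p, r'), Sum.inl b => W p.1.2 r' b
    | Sum.inr (p, r'), Sum.inr (q, c') => if p = q then Z r' c' else 0

/-- The spectral radius of a square real matrix: the maximum of `|λ|` over the complex
roots `λ` of its characteristic polynomial (and `0` if there are none). -/
noncomputable def specRad {n : Type*} [Fintype n] [DecidableEq n]
    (A : Matrix n n ℝ) : ℝ :=
  (((Matrix.charpoly (A.map Complex.ofReal)).roots).map (fun z : ℂ => ‖z‖)).fold max 0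

open Filter Topology

theorem Multiset.fold_max_le_iff {α : Type*} [LinearOrder α] {s : Multiset α} {b c : α} :
    s.fold max b ≤ c ↔ b ≤ c ∧ ∀ x ∈ s, x ≤ c := by
  induction s using Multiset.induction_on with
  | empty => simp
  | cons a s ih => simp [Multiset.fold_cons_left, ih, and_left_comm]

theorem tendsto_rpow_one_div_natCast {C : ℝ} (hC : C ≠ 0) :
    Tendsto (fun k : ℕ => C ^ (1 / k : ℝ)) atTop (𝓝 1) := by
  simpa [Function.comp_def] using
    (Real.continuousAt_const_rpow hC).tendsto.comp tendsto_one_div_atTop_nhds_zero_nat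

theorem spectralRadius_le_of_norm_pow_le {A B : Type*} [NormedRing A] [NormedAlgebra ℂ A]
    [CompleteSpace A] [NormedRing B] [NormedAlgebra ℂ B] [CompleteSpace B] {a : A} {b : B}
    (C : ℝ) (h : ∀ k : ℕ, ‖a ^ k‖ ≤ C * ‖b ^ k‖) :
    spectralRadius ℂ a ≤ spectralRadius ℂ b := by
  set C' := max C 1
  have hC' : 0 < C' := lt_max_of_lt_right one_pos
  have hC'k := ENNReal.tendsto_ofReal (tendsto_rpow_one_div_natCast hC'.ne')
  rw [ENNReal.ofReal_one] at hC'k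
  have hb := ENNReal.Tendsto.mul hC'k (Or.inl one_ne_zero)
    (spectrum.pow_norm_pow_one_div_tendsto_nhds_spectralRadius b) (Or.inr ENNReal.one_ne_top)
  rw [one_mul] at hb
  refine le_of_tendsto_of_tendsto' (spectrum.pow_norm_pow_one_div_tendsto_nhds_spectralRadius a)
    hb fun k => ?_
  rw [← ENNReal.ofReal_mul (by positivity), ← Real.mul_rpow hC'.le (norm_nonneg _)]
  gcongr
  exact (h k).trans (by gcongr; exact le_max_left C 1)

section LinftyOp

attribute [local instance] Matrix.linftyOpSeminormedAddCommGroup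

theorem Matrix.linfty_opNNNorm_le_card_mul {n₁ n₂ α : Type*} [Fintype n₁] [Fintype n₂]
    [SeminormedAddCommGroup α] {S : Matrix n₁ n₁ α} {R : Matrix n₂ n₂ α} (φ : n₁ → n₂)
    (h : ∀ i j, ‖S i j‖₊ ≤ ‖R (φ i) (φ j)‖₊) : ‖S‖₊ ≤ Fintype.card n₁ * ‖R‖₊ := by
  have hR : ∀ i j, ‖R i j‖₊ ≤ ‖R‖₊ := fun i j => by
    rw [Matrix.linfty_opNNNorm_def]
    exact (Finset.single_le_sum (fun _ _ => zero_le) (Finset.mem_univ j)).trans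
      (Finset.le_sup (f := fun i => ∑ j, ‖R i j‖₊) (Finset.mem_univ i))
  rw [Matrix.linfty_opNNNorm_def]
  refine Finset.sup_le fun i _ => ?_
  calc ∑ j, ‖S i j‖₊ ≤ ∑ _j : n₁, ‖R‖₊ := Finset.sum_le_sum fun j _ => (h i j).trans (hR _ _)
    _ = Fintype.card n₁ * ‖R‖₊ := by simp

end LinftyOp

namespace Matrix

variable {n₁ n₂ α : Type*} [Fintype n₁] [DecidableEq n₁] [Fintype n₂] [DecidableEq n₂]
  [CommSemiring α] [PartialOrder α] [IsOrderedRing α]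

theorem sum_fiber_pow_apply_le {S : Matrix n₁ n₁ α} {Q : Matrix n₂ n₂ α} (φ : n₁ → n₂)
    (hS : ∀ i j, 0 ≤ S i j) (hQ : ∀ i j, 0 ≤ Q i j)
    (h : ∀ i x, ∑ j with φ j = x, S i j ≤ Q (φ i) x) (k : ℕ) (i : n₁) (x : n₂) :
    ∑ j with φ j = x, (S ^ k) i j ≤ (Q ^ k) (φ i) x := by
  induction k generalizing i with
  | zero => simp [one_apply, Finset.sum_ite_eq]
  | succ k ih =>
    calc ∑ j with φ j = x, (S ^ (k + 1)) i j
        = ∑ l, S i l * ∑ j with φ j = x, (S ^ k) l j := by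
          simp only [pow_succ', mul_apply, Finset.mul_sum]
          exact Finset.sum_comm
      _ ≤ ∑ l, S i l * (Q ^ k) (φ l) x := by gcongr with l; exacts [hS i l, ih l]
      _ = ∑ y, ∑ l with φ l = y, S i l * (Q ^ k) y x := by
          rw [← Finset.sum_fiberwise Finset.univ φ]
          refine Finset.sum_congr rfl fun y _ => Finset.sum_congr rfl fun l hl => ?_
          rw [(Finset.mem_filter.1 hl).2]
      _ = ∑ y, (∑ l with φ l = y, S i l) * (Q ^ k) y x := by simp only [Finset.sum_mul]
      _ ≤ ∑ y, Q (φ i) y * (Q ^ k) y x := by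
          gcongr with y; exacts [pow_apply_nonneg hQ k y x, h i y]
      _ = (Q ^ (k + 1)) (φ i) x := by rw [pow_succ', mul_apply]

theorem pow_apply_le_pow_apply_of_sum_fiber_le {S : Matrix n₁ n₁ α} {Q : Matrix n₂ n₂ α}
    (φ : n₁ → n₂) (hS : ∀ i j, 0 ≤ S i j) (hQ : ∀ i j, 0 ≤ Q i j)
    (h : ∀ i x, ∑ j with φ j = x, S i j ≤ Q (φ i) x) (k : ℕ) (i j : n₁) :
    (S ^ k) i j ≤ (Q ^ k) (φ i) (φ j) :=
  (Finset.single_le_sum (fun j' _ => pow_apply_nonneg hS k i j') (by simp)).trans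
    (sum_fiber_pow_apply_le φ hS hQ h k i (φ j))

end Matrix

section SpecRad

variable {n₁ n₂ : Type*} [Fintype n₁] [DecidableEq n₁] [Fintype n₂] [DecidableEq n₂]

theorem specRad_nonneg (A : Matrix n₁ n₁ ℝ) : 0 ≤ specRad A :=
  (Multiset.fold_max_le_iff.mp le_rfl).1

theorem specRad_le_iff (A : Matrix n₁ n₁ ℝ) {r : ℝ} (hr : 0 ≤ r) :
    specRad A ≤ r ↔ spectralRadius ℂ (A.map Complex.ofReal) ≤ ENNReal.ofReal r := by
  simp only [specRad, Multiset.fold_max_le_iff, hr, true_and, Multiset.forall_mem_map_iff,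
    spectralRadius, iSup₂_le_iff, Matrix.mem_spectrum_iff_isRoot_charpoly,
    Polynomial.mem_roots (Matrix.charpoly_monic _).ne_zero]
  simp [← ENNReal.ofReal_le_ofReal_iff hr, ofReal_norm, enorm_eq_nnnorm]

theorem specRad_transpose (A : Matrix n₁ n₁ ℝ) : specRad Aᵀ = specRad A := by
  rw [specRad, specRad, transpose_map, charpoly_transpose]

attribute [local instance] Matrix.linftyOpNormedAddCommGroup Matrix.linftyOpNormedRing
  Matrix.linftyOpNormedAlgebra

theorem specRad_le_of_pow_apply_le {S : Matrix n₁ n₁ ℝ} {R : Matrix n₂ n₂ ℝ} (φ : n₁ → n₂)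
    (hS : ∀ i j, 0 ≤ S i j) (h : ∀ k i j, (S ^ k) i j ≤ (R ^ k) (φ i) (φ j)) :
    specRad S ≤ specRad R := by
  have hR := specRad_nonneg R
  rw [specRad_le_iff S hR]
  refine (spectralRadius_le_of_norm_pow_le (Fintype.card n₁) fun k => ?_).trans
    ((specRad_le_iff R hR).1 le_rfl)
  change ‖S.map Complex.ofRealHom ^ k‖ ≤ _ * ‖R.map Complex.ofRealHom ^ k‖
  rw [← Matrix.map_pow, ← Matrix.map_pow]
  have hSk := pow_apply_nonneg hS k
  have hnorm := Matrix.linfty_opNNNorm_le_card_mul (S := (S ^ k).map Complex.ofReal)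
    (R := (R ^ k).map Complex.ofReal) φ fun i j => by
      rw [← NNReal.coe_le_coe, coe_nnnorm, coe_nnnorm, map_apply, map_apply, Complex.norm_real,
        Complex.norm_real, Real.norm_of_nonneg (hSk i j),
        Real.norm_of_nonneg ((hSk i j).trans (h k i j))]
      exact h k i j
  exact_mod_cast hnorm

theorem specRad_le_of_sum_fiber_le {S : Matrix n₁ n₁ ℝ} {Q : Matrix n₂ n₂ ℝ} (φ : n₁ → n₂)
    (hS : ∀ i j, 0 ≤ S i j) (hQ : ∀ i j, 0 ≤ Q i j)
    (h : ∀ i x, ∑ j with φ j = x, S i j ≤ Q (φ i) x) : specRad S ≤ specRad Q :=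
  specRad_le_of_pow_apply_le φ hS (pow_apply_le_pow_apply_of_sum_fiber_le φ hS hQ h)

end SpecRad

section Specialization

variable {l m y w : ℕ} (U : Matrix (Fin l) (Fin l) ℝ) (Z : Matrix (Fin m) (Fin m) ℝ)
  (Y : Fin y → Matrix (Fin l) (Fin m) ℝ) (W : Fin w → Matrix (Fin m) (Fin l) ℝ)

def exitSpecialization : Matrix (Fin l ⊕ (Fin w × Fin m)) (Fin l ⊕ (Fin w × Fin m)) ℝ :=
  fun r c =>
    match r, c with
    | Sum.inl a, Sum.inl b => U a b
    | Sum.inl a, Sum.inr (_, c') => (∑ i, Y i) a c'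
    | Sum.inr (j, r'), Sum.inl b => W j r' b
    | Sum.inr (j, r'), Sum.inr (j', c') => if j = j' then Z r' c' else 0

def forgetEntry (T : Finset (Fin y × Fin w)) : Fin l ⊕ (↥T × Fin m) → Fin l ⊕ (Fin w × Fin m) :=
  Sum.map id fun pc => (pc.1.1.2, pc.2)

def forgetExit : Fin l ⊕ (Fin w × Fin m) → Fin l ⊕ Fin m :=
  Sum.map id Prod.snd

variable {U Z Y W}

theorem origMatrix_nonneg (hU : ∀ a b, 0 ≤ U a b) (hZ : ∀ a b, 0 ≤ Z a b)
    (hY : ∀ i a b, 0 ≤ Y i a b) (hW : ∀ j a b, 0 ≤ W j a b) :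
    ∀ x x', 0 ≤ origMatrix U Z Y W x x' := by
  rintro (a | r) (b | c) <;> simp only [origMatrix, fromBlocks_apply₁₁, fromBlocks_apply₁₂,
    fromBlocks_apply₂₁, fromBlocks_apply₂₂, Matrix.sum_apply]
  exacts [hU a b, Finset.sum_nonneg fun i _ => hY i a c, Finset.sum_nonneg fun j _ => hW j r b,
    hZ r c]

theorem exitSpecialization_nonneg (hU : ∀ a b, 0 ≤ U a b) (hZ : ∀ a b, 0 ≤ Z a b)
    (hY : ∀ i a b, 0 ≤ Y i a b) (hW : ∀ j a b, 0 ≤ W j a b) :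
    ∀ u u', 0 ≤ exitSpecialization U Z Y W u u' := by
  rintro (a | ⟨j, r⟩) (b | ⟨j', c⟩) <;> simp only [exitSpecialization, Matrix.sum_apply]
  · exact hU a b
  · exact Finset.sum_nonneg fun i _ => hY i a c
  · exact hW j r b
  · split_ifs
    exacts [hZ r c, le_rfl]

theorem thinnedSpecialization_nonneg (T : Finset (Fin y × Fin w)) (hU : ∀ a b, 0 ≤ U a b)
    (hZ : ∀ a b, 0 ≤ Z a b) (hY : ∀ i a b, 0 ≤ Y i a b) (hW : ∀ j a b, 0 ≤ W j a b) :
    ∀ z z', 0 ≤ thinnedSpecialization U Z Y W T z z' := by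
  rintro (a | ⟨p, r⟩) (b | ⟨q, c⟩) <;> simp only [thinnedSpecialization]
  · exact hU a b
  · exact hY _ a c
  · exact hW _ r b
  · split_ifs
    exacts [hZ r c, le_rfl]

theorem sum_fiber_exitSpecialization (u : Fin l ⊕ (Fin w × Fin m)) (x : Fin l ⊕ Fin m) :
    ∑ u' with forgetExit u' = x, exitSpecialization U Z Y W u' u =
      origMatrix U Z Y W x (forgetExit u) := by
  rw [Finset.sum_filter, Fintype.sum_sum_type, Fintype.sum_prod_type]
  rcases u with b | ⟨j', c⟩ <;> rcases x with a | r <;>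
    simp [forgetExit, exitSpecialization, origMatrix, Matrix.sum_apply]

theorem sum_fiber_thinnedSpecialization_le (T : Finset (Fin y × Fin w)) (hY : ∀ i a b, 0 ≤ Y i a b)
    (z : Fin l ⊕ (↥T × Fin m)) (u : Fin l ⊕ (Fin w × Fin m)) :
    ∑ z' with forgetEntry T z' = u, thinnedSpecialization U Z Y W T z z' ≤
      exitSpecialization U Z Y W (forgetEntry T z) u := by
  rw [Finset.sum_filter, Fintype.sum_sum_type, Fintype.sum_prod_type]
  rcases z with a | ⟨p, r⟩ <;> rcases u with b | ⟨j, c⟩ <;>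
    simp only [forgetEntry, exitSpecialization, thinnedSpecialization, Sum.map_inl, Sum.map_inr,
      id_eq, Sum.inl.injEq, Sum.inr.injEq, Prod.mk.injEq, reduceCtorEq, ↓reduceIte, ite_and,
      Finset.sum_ite_irrel, Finset.sum_ite_eq', Finset.mem_univ, Finset.sum_const_zero,
      Finset.univ_eq_attach, add_zero, zero_add, Matrix.sum_apply, le_refl]
  case inl.inr =>
    calc ∑ p ∈ T.attach, (if p.1.2 = j then Y p.1.1 a c else 0)
        = ∑ p ∈ T, if p.2 = j then Y p.1 a c else 0 :=
          Finset.sum_attach T fun p : Fin y × Fin w => if p.2 = j then Y p.1 a c else 0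
      _ ≤ ∑ p : Fin y × Fin w, if p.2 = j then Y p.1 a c else 0 :=
          Finset.sum_le_sum_of_subset_of_nonneg (Finset.subset_univ T) fun p _ _ => by
            split_ifs
            exacts [hY _ a c, le_rfl]
      _ = ∑ i, Y i a c := by simp [Fintype.sum_prod_type]
  case inr.inr =>
    refine le_of_eq ?_
    rw [Finset.sum_eq_single p (fun q _ hq => by simp [Ne.symm hq])
      fun hp => absurd (Finset.mem_attach T p) hp]
    simp

end Specialization

theorem specRad_thinnedSpecialization_le_general
    {l m y w : ℕ}
    (U : Matrix (Fin l) (Fin l) ℝ) (Z : Matrix (Fin m) (Fin m) ℝ)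
    (Y : Fin y → Matrix (Fin l) (Fin m) ℝ) (W : Fin w → Matrix (Fin m) (Fin l) ℝ)
    (hU : ∀ a b, 0 ≤ U a b) (hZ : ∀ a b, 0 ≤ Z a b)
    (hY : ∀ i a b, 0 ≤ Y i a b) (hW : ∀ j a b, 0 ≤ W j a b)
    (T : Finset (Fin y × Fin w)) :
    specRad (thinnedSpecialization U Z Y W T) ≤ specRad (origMatrix U Z Y W) := by
  have hE := exitSpecialization_nonneg hU hZ hY hW
  calc specRad (thinnedSpecialization U Z Y W T)
      ≤ specRad (exitSpecialization U Z Y W) :=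
        specRad_le_of_sum_fiber_le (forgetEntry T) (thinnedSpecialization_nonneg T hU hZ hY hW)
          hE (sum_fiber_thinnedSpecialization_le T hY)
    _ = specRad (exitSpecialization U Z Y W)ᵀ := (specRad_transpose _).symm
    _ ≤ specRad (origMatrix U Z Y W)ᵀ :=
        specRad_le_of_sum_fiber_le forgetExit (fun u u' => hE u' u)
          (fun x x' => origMatrix_nonneg hU hZ hY hW x' x)
          fun u x => (sum_fiber_exitSpecialization u x).le
    _ = specRad (origMatrix U Z Y W) := specRad_transpose _

/-- the spectral radius of any thinned specialization of a nonnegative block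
matrix `M` is at most the spectral radius of `M`. -/
theorem specRad_thinnedSpecialization_le
    {l m y w : ℕ} (hl : 1 ≤ l) (hm : 1 ≤ m) (hy : 1 ≤ y) (hw : 1 ≤ w)
    (U : Matrix (Fin l) (Fin l) ℝ) (Z : Matrix (Fin m) (Fin m) ℝ)
    (Y : Fin y → Matrix (Fin l) (Fin m) ℝ) (W : Fin w → Matrix (Fin m) (Fin l) ℝ)
    (hU : ∀ a b, 0 ≤ U a b) (hZ : ∀ a b, 0 ≤ Z a b)
    (hY : ∀ i a b, 0 ≤ Y i a b) (hW : ∀ j a b, 0 ≤ W j a b)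
    (T : Finset (Fin y × Fin w)) :
    specRad (thinnedSpecialization U Z Y W T) ≤ specRad (origMatrix U Z Y W) :=
  specRad_thinnedSpecialization_le_general U Z Y W hU hZ hY hW T
end
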